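/- arXiv:math/0508175 — 2 statements merged into one kernel-verified Lean document; each statement's English description precedes it below -/
import Mathlib

section
/- The ℚ-linear extension of τ to ℚ ⊗ L maps the dual lattice L⊥ onto itself, and it permutes the cosets of L in L⊥ as follows: for each j = 0, 1, 2 the coset L^j = d_j + L (where d₀ = 0, d₁ = (−β₁+β₂)/3, d₂ = (β₁−β₂)/3) is mapped onto itself, while τ(β₂/2 + L^j) = β₀/2 + L^j, τ(β₀/2 + L^j) = β₁/2 + L^j, and τ(β₁/2 + L^j) = β₂/2 + L^j; in particular exactly three of the twelve cosets of L in L⊥ are τ-stable and the remaining nine fall into three τ-orbits of length 3. -/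
/-- The bilinear form of `√2 A₂` extended `ℚ`-bilinearly to `ℚ ⊗ L = ℚ²`. -/
def Bq (x y : ℚ × ℚ) : ℚ :=
  4 * x.1 * y.1 - 2 * x.1 * y.2 - 2 * x.2 * y.1 + 4 * x.2 * y.2

/-- The lattice `L = √2 A₂ = ℤβ₁ ⊕ ℤβ₂`, viewed as a subgroup of `ℚ ⊗ L = ℚ²`. -/
def Lq : AddSubgroup (ℚ × ℚ) where
  carrier := {x | ∃ a b : ℤ, x = ((a : ℚ), (b : ℚ))}
  zero_mem' := ⟨0, 0, by ext <;> simp⟩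
  add_mem' := by
    rintro x y ⟨a, b, rfl⟩ ⟨c, d, rfl⟩
    exact ⟨a + c, b + d, by push_cast; rfl⟩
  neg_mem' := by
    rintro x ⟨a, b, rfl⟩
    exact ⟨-a, -b, by push_cast; rfl⟩

/-- The dual lattice `L⊥ = {x ∈ ℚ ⊗ L : ⟨x, y⟩ ∈ ℤ for all y ∈ L}`. -/
def Ldual : AddSubgroup (ℚ × ℚ) where
  carrier := {x | ∀ y ∈ Lq, ∃ n : ℤ, Bq x y = (n : ℚ)}
  zero_mem' := by
    intro y _
    exact ⟨0, by simp [Bq]⟩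
  add_mem' := by
    intro x x' hx hx' y hy
    obtain ⟨m, hm⟩ := hx y hy
    obtain ⟨n, hn⟩ := hx' y hy
    refine ⟨m + n, ?_⟩
    have h : Bq (x + x') y = Bq x y + Bq x' y := by simp [Bq]; ring
    rw [h, hm, hn]; push_cast; ring
  neg_mem' := by
    intro x hx y hy
    obtain ⟨m, hm⟩ := hx y hy
    refine ⟨-m, ?_⟩
    have h : Bq (-x) y = -Bq x y := by simp [Bq]; ring
    rw [h, hm]; push_cast; ring


/-- The coset `v + L` of the lattice `L` in `ℚ ⊗ L = ℚ²`. -/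
def coset (v : ℚ × ℚ) : Set (ℚ × ℚ) := {x | x - v ∈ Lq}

/-!
In coordinates `τ (x, y) = (-y, x - y)`. This is an isometry of `⟨·,·⟩` of order 3 that maps `L`
into itself; having order 3 it maps `L` onto `L`, and being an isometry it then maps `L⊥` onto
`L⊥` and `v + L` onto `τ v + L`. Each `d_j` is fixed by `τ` modulo `L`, and `τ` cycles the
half-vectors `β₂/2 ↦ β₀/2 ↦ β₁/2 ↦ β₂/2` exactly, so `τ (c + d_j + L) = τ c + d_j + L`. Hence
`c + d_j + L` is `τ`-stable iff `τ c - c ∈ L`, which fails for `c ≠ 0` since `τ c - c` then has a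
half-integral coordinate.
-/

open scoped Pointwise

lemma Set.image_eq_of_mapsTo_of_iterate_eq_id {α : Type*} {f : α → α} {s : Set α}
    (hs : Set.MapsTo f s s) {n : ℕ} (hf : f^[n + 1] = id) : f '' s = s :=
  Set.SurjOn.image_eq_of_mapsTo
    (Set.LeftInvOn.surjOn (fun x _ => by rw [← Function.iterate_succ_apply' f n x, hf, id])
      (hs.iterate n))
    hs

lemma mem_Lq_iff {x : ℚ × ℚ} : x ∈ Lq ↔ x.1.den = 1 ∧ x.2.den = 1 := by
  constructor
  · rintro ⟨a, b, rfl⟩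
    exact ⟨Rat.den_intCast a, Rat.den_intCast b⟩
  · rintro ⟨h₁, h₂⟩
    exact ⟨x.1.num, x.2.num, Prod.ext (Rat.coe_int_num_of_den_eq_one h₁).symm
      (Rat.coe_int_num_of_den_eq_one h₂).symm⟩

lemma coset_eq_vadd (v : ℚ × ℚ) : coset v = v +ᵥ (Lq : Set (ℚ × ℚ)) := by
  ext x
  rw [mem_leftAddCoset_iff, neg_add_eq_sub]
  rfl

lemma coset_eq_coset_iff {v w : ℚ × ℚ} : coset v = coset w ↔ v - w ∈ Lq := by
  rw [coset_eq_vadd, coset_eq_vadd, leftAddCoset_eq_iff, neg_add_eq_sub, ← neg_mem_iff, neg_sub]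

def halfReps : Set (ℚ × ℚ) := {(0, 0), (0, 1/2), (-1/2, -1/2), (1/2, 0)}

def thirdReps : Set (ℚ × ℚ) := {(0, 0), (-1/3, 1/3), (1/3, -1/3)}

section Tau

variable {τ : (ℚ × ℚ) →ₗ[ℚ] (ℚ × ℚ)}

lemma tau_apply (hτ1 : τ (1, 0) = (0, 1)) (hτ2 : τ (0, 1) = (-1, -1)) (x : ℚ × ℚ) :
    τ x = (-x.2, x.1 - x.2) := by
  calc τ x = τ (x.1 • (1, 0) + x.2 • (0, 1)) := by simp
    _ = (-x.2, x.1 - x.2) := by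
      rw [map_add, map_smul, map_smul, hτ1, hτ2]
      ext <;> simp [sub_eq_add_neg]

lemma tau_iterate_three (hτ : ∀ x, τ x = (-x.2, x.1 - x.2)) : (⇑τ)^[3] = id := by
  funext x
  simp only [Function.iterate_succ_apply', Function.iterate_zero_apply, hτ]
  ext <;> dsimp <;> ring

lemma Bq_tau_tau (hτ : ∀ x, τ x = (-x.2, x.1 - x.2)) (x y : ℚ × ℚ) :
    Bq (τ x) (τ y) = Bq x y := by
  simp only [Bq, hτ]
  ring

lemma mapsTo_tau_Lq (hτ : ∀ x, τ x = (-x.2, x.1 - x.2)) :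
    Set.MapsTo τ (Lq : Set (ℚ × ℚ)) Lq := by
  rintro _ ⟨a, b, rfl⟩
  exact ⟨-b, a - b, by rw [hτ]; push_cast; rfl⟩

lemma image_tau_Lq (hτ : ∀ x, τ x = (-x.2, x.1 - x.2)) : τ '' (Lq : Set (ℚ × ℚ)) = Lq :=
  Set.image_eq_of_mapsTo_of_iterate_eq_id (mapsTo_tau_Lq hτ) (tau_iterate_three hτ)

lemma mapsTo_tau_Ldual (hτ : ∀ x, τ x = (-x.2, x.1 - x.2)) :
    Set.MapsTo τ (Ldual : Set (ℚ × ℚ)) Ldual := by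
  intro x hx y hy
  obtain ⟨y', hy', rfl⟩ : y ∈ τ '' (Lq : Set (ℚ × ℚ)) := (image_tau_Lq hτ).symm ▸ hy
  rw [Bq_tau_tau hτ]
  exact hx y' hy'

lemma image_coset (hτ : ∀ x, τ x = (-x.2, x.1 - x.2)) (v : ℚ × ℚ) :
    τ '' coset v = coset (τ v) := by
  rw [coset_eq_vadd, coset_eq_vadd, Set.image_vadd_distrib, image_tau_Lq hτ]

lemma tau_sub_self_mem_Lq (hτ : ∀ x, τ x = (-x.2, x.1 - x.2)) {d : ℚ × ℚ}
    (hd : d ∈ thirdReps) : τ d - d ∈ Lq := by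
  rcases hd with rfl | rfl | rfl <;> rw [hτ, mem_Lq_iff] <;> norm_num

lemma image_coset_add (hτ : ∀ x, τ x = (-x.2, x.1 - x.2)) {d : ℚ × ℚ} (hd : d ∈ thirdReps)
    (c : ℚ × ℚ) : τ '' coset (c + d) = coset (τ c + d) := by
  rw [image_coset hτ, map_add, coset_eq_coset_iff, add_sub_add_left_eq_sub]
  exact tau_sub_self_mem_Lq hτ hd

lemma tau_sub_self_mem_Lq_iff (hτ : ∀ x, τ x = (-x.2, x.1 - x.2)) {c : ℚ × ℚ}
    (hc : c ∈ halfReps) : τ c - c ∈ Lq ↔ c = 0 := by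
  rcases hc with rfl | rfl | rfl | rfl <;> rw [hτ, mem_Lq_iff] <;> norm_num

end Tau

/-- The `ℚ`-linear extension of `τ` (determined by `τβ₁ = β₂`,
`τβ₂ = β₀`) maps the dual lattice `L⊥` onto itself and permutes the cosets of `L` in
`L⊥` as follows: each coset `L^j = d_j + L` (`d₀ = 0`, `d₁ = (−β₁+β₂)/3`,
`d₂ = (β₁−β₂)/3`) is mapped onto itself, while `τ(β₂/2 + L^j) = β₀/2 + L^j`,
`τ(β₀/2 + L^j) = β₁/2 + L^j`, `τ(β₁/2 + L^j) = β₂/2 + L^j`.  In particular, among the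
twelve cosets `c + d + L` (`c ∈ {0, β₂/2, β₀/2, β₁/2}`, `d ∈ {d₀, d₁, d₂}`) exactly the
three with `c = 0` are `τ`-stable, and the remaining nine fall into three `τ`-orbits of
length 3. -/
theorem sqrt2A2_tau_permutes_dual_cosets
    (τ : (ℚ × ℚ) →ₗ[ℚ] (ℚ × ℚ))
    (hτ1 : τ (1, 0) = (0, 1)) (hτ2 : τ (0, 1) = (-1, -1)) :
    let C : Set (ℚ × ℚ) := {(0, 0), (0, 1/2), (-1/2, -1/2), (1/2, 0)}
    let D : Set (ℚ × ℚ) := {(0, 0), (-1/3, 1/3), (1/3, -1/3)}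
    (τ '' (Ldual : Set (ℚ × ℚ)) = (Ldual : Set (ℚ × ℚ))) ∧
    (∀ d ∈ D,
      τ '' coset d = coset d ∧
      τ '' coset ((0, 1/2) + d) = coset ((-1/2, -1/2) + d) ∧
      τ '' coset ((-1/2, -1/2) + d) = coset ((1/2, 0) + d) ∧
      τ '' coset ((1/2, 0) + d) = coset ((0, 1/2) + d)) ∧
    (∀ c ∈ C, ∀ d ∈ D, (τ '' coset (c + d) = coset (c + d) ↔ c = 0)) := by
  intro C D
  have hτ := tau_apply hτ1 hτ2
  refine ⟨Set.image_eq_of_mapsTo_of_iterate_eq_id (mapsTo_tau_Ldual hτ) (tau_iterate_three hτ),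
    fun d hd => ?_, fun c hc d hd => ?_⟩
  · have hd₀ := image_coset_add hτ hd 0
    rw [zero_add, map_zero, zero_add] at hd₀
    refine ⟨hd₀, ?_, ?_, ?_⟩ <;> rw [image_coset_add hτ hd, hτ] <;> norm_num
  · rw [image_coset_add hτ hd, coset_eq_coset_iff, add_sub_add_right_eq_sub]
    exact tau_sub_self_mem_Lq_iff hτ hc
end

section
/- In the coset (−β₁+β₂)/3 + L of L in ℚ ⊗ L, the minimum of the norm ⟨x,x⟩ equals 4/3, and it is attained at exactly three vectors, namely (−β₁+β₂)/3, (−β₂+β₀)/3, and (−β₀+β₁)/3 (these three vectors are congruent to one another modulo L, and every other element x of the coset satisfies ⟨x,x⟩ > 4/3). -/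
/-!
Write a point of the coset as `x = (a - 1/3, b + 1/3)` with `a b : ℤ`. Then
`⟨x, x⟩ = 2 (u² + v² + w²) - 8/3` for the integers `u = 1 - a`, `v = b + 1`, `w = a - b`,
which satisfy `u + v + w = 2`. Since `k ≤ k²` for every integer `k`, `u² + v² + w² ≥ 2`, with
equality exactly when `u, v, w ∈ {0, 1}`, i.e. when `(u, v, w)` is a permutation of `(1, 1, 0)`.
-/

def cosetPoint (a b : ℤ) : ℚ × ℚ := ((a : ℚ) - 1/3, (b : ℚ) + 1/3)

lemma sub_mem_Lq_iff_eq_cosetPoint {x : ℚ × ℚ} :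
    x - (-1/3, 1/3) ∈ Lq ↔ ∃ a b : ℤ, x = cosetPoint a b := by
  refine exists₂_congr fun a b => ?_
  simp only [cosetPoint, Prod.ext_iff, Prod.fst_sub, Prod.snd_sub]
  constructor <;> rintro ⟨h₁, h₂⟩ <;> constructor <;> linarith

lemma Bq_cosetPoint (a b : ℤ) :
    Bq (cosetPoint a b) (cosetPoint a b) =
      2 * (((1 - a) ^ 2 + (b + 1) ^ 2 + (a - b) ^ 2 : ℤ) : ℚ) - 8/3 := by
  simp only [Bq, cosetPoint]
  push_cast
  ring

lemma Int.add_add_le_sq_add_sq_add_sq (u v w : ℤ) : u + v + w ≤ u ^ 2 + v ^ 2 + w ^ 2 := by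
  linarith [Int.le_self_sq u, Int.le_self_sq v, Int.le_self_sq w]

lemma Int.sq_eq_self_iff {k : ℤ} : k ^ 2 = k ↔ k = 0 ∨ k = 1 := by
  rw [← sub_eq_zero, show k ^ 2 - k = k * (k - 1) by ring, mul_eq_zero, sub_eq_zero]

lemma Int.sq_eq_self_of_sq_add_sq_add_sq_eq_add_add {u v w : ℤ}
    (h : u ^ 2 + v ^ 2 + w ^ 2 = u + v + w) : u ^ 2 = u ∧ v ^ 2 = v ∧ w ^ 2 = w := by
  have hu := Int.le_self_sq u
  have hv := Int.le_self_sq v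
  have hw := Int.le_self_sq w
  refine ⟨?_, ?_, ?_⟩ <;> linarith

lemma Int.sq_add_sq_add_sq_eq_two {u v w : ℤ} (hsum : u + v + w = 2)
    (hsq : u ^ 2 + v ^ 2 + w ^ 2 = 2) :
    (u = 1 ∧ v = 1 ∧ w = 0) ∨ (u = 1 ∧ v = 0 ∧ w = 1) ∨ (u = 0 ∧ v = 1 ∧ w = 1) := by
  obtain ⟨hu, hv, hw⟩ := Int.sq_eq_self_of_sq_add_sq_add_sq_eq_add_add (hsq.trans hsum.symm)
  rcases Int.sq_eq_self_iff.1 hu with rfl | rfl <;>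
    rcases Int.sq_eq_self_iff.1 hv with rfl | rfl <;>
    rcases Int.sq_eq_self_iff.1 hw with rfl | rfl <;> simp_all

lemma four_thirds_le_Bq_cosetPoint (a b : ℤ) : 4/3 ≤ Bq (cosetPoint a b) (cosetPoint a b) := by
  have hS := Int.add_add_le_sq_add_sq_add_sq (1 - a) (b + 1) (a - b)
  rw [show 1 - a + (b + 1) + (a - b) = 2 by ring] at hS
  have hS' : (2 : ℚ) ≤ (((1 - a) ^ 2 + (b + 1) ^ 2 + (a - b) ^ 2 : ℤ) : ℚ) := by exact_mod_cast hS
  rw [Bq_cosetPoint]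
  linarith

lemma Bq_cosetPoint_eq_four_thirds_iff (a b : ℤ) :
    Bq (cosetPoint a b) (cosetPoint a b) = 4/3 ↔
      (a = 0 ∧ b = 0) ∨ (a = 0 ∧ b = -1) ∨ (a = 1 ∧ b = 0) := by
  rw [Bq_cosetPoint]
  constructor
  · intro h
    have hS : (1 - a) ^ 2 + (b + 1) ^ 2 + (a - b) ^ 2 = 2 := by
      exact_mod_cast (by linarith : (((1 - a) ^ 2 + (b + 1) ^ 2 + (a - b) ^ 2 : ℤ) : ℚ) = 2)
    rcases Int.sq_add_sq_add_sq_eq_two (by ring) hS with h | h | h <;> omega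
  · rintro (⟨rfl, rfl⟩ | ⟨rfl, rfl⟩ | ⟨rfl, rfl⟩) <;> norm_num

/-- In the coset `(−β₁+β₂)/3 + L` of `L = √2 A₂` in `ℚ ⊗ L`, the
minimum of the norm `⟨x,x⟩` equals `4/3`, attained at exactly the three vectors
`(−β₁+β₂)/3 = (−1/3, 1/3)`, `(−β₂+β₀)/3 = (−1/3, −2/3)`, and
`(−β₀+β₁)/3 = (2/3, 1/3)`. -/
theorem sqrt2A2_coset_min_norm_four_thirds :
    (∀ x : ℚ × ℚ, x - (-1/3, 1/3) ∈ Lq → 4/3 ≤ Bq x x) ∧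
    {x : ℚ × ℚ | x - (-1/3, 1/3) ∈ Lq ∧ Bq x x = 4/3} =
      {((-1/3 : ℚ), (1/3 : ℚ)), (-1/3, -2/3), (2/3, 1/3)} := by
  refine ⟨fun x hx => ?_, ?_⟩
  · obtain ⟨a, b, rfl⟩ := sub_mem_Lq_iff_eq_cosetPoint.1 hx
    exact four_thirds_le_Bq_cosetPoint a b
  ext x
  simp only [Set.mem_ofPred_eq, Set.mem_insert_iff, Set.mem_singleton_iff,
    sub_mem_Lq_iff_eq_cosetPoint]
  constructor
  · rintro ⟨⟨a, b, rfl⟩, hx⟩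
    rcases (Bq_cosetPoint_eq_four_thirds_iff a b).1 hx with
      ⟨rfl, rfl⟩ | ⟨rfl, rfl⟩ | ⟨rfl, rfl⟩ <;> norm_num [cosetPoint]
  · rintro (rfl | rfl | rfl)
    · exact ⟨⟨0, 0, by norm_num [cosetPoint]⟩, by norm_num [Bq]⟩
    · exact ⟨⟨0, -1, by norm_num [cosetPoint]⟩, by norm_num [Bq]⟩
    · exact ⟨⟨1, 0, by norm_num [cosetPoint]⟩, by norm_num [Bq]⟩
end
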